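/- For k ≥ 1 and real s > 0, y, the k-th partial derivative of the Kummer function with respect to its first parameter at 0 satisfies ∂^k/∂u^k ₁F₁(u; s; y)|_{u=0} = k! Σ_{n≥k} c(n,k) y^n/(n! ⟨s⟩_n), where c(n,k) are the unsigned Stirling numbers of the first kind. -/
import Mathlib


open Finset

/-- Unsigned Stirling numbers of the first kind: coefficients of the rising factorial
`X (X+1) ⋯ (X+n-1)`. -/
noncomputable def stirling1 (n j : ℕ) : ℕ := (ascPochhammer ℕ n).coeff j

/-- Partial exponential Bell polynomial `B_{n,j}(x_1, …, x_{n-j+1})`, a sum over sequences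
`λ_1, …, λ_{n-j+1}` of nonnegative integers with `Σ i·λ_i = n` and `Σ λ_i = j`. -/
noncomputable def partialBell (n j : ℕ) (x : ℕ → ℝ) : ℝ :=
  ∑ μ ∈ (Finset.Nat.antidiagonalTuple (n - j + 1) j).filter
      (fun μ => ∑ i : Fin (n - j + 1), (i.1 + 1) * μ i = n),
    (n.factorial : ℝ) / (∏ i : Fin (n - j + 1), ((μ i).factorial : ℝ)) *
      ∏ i : Fin (n - j + 1), (x (i.1 + 1) / ((i.1 + 1).factorial : ℝ)) ^ μ i

/-- Complete exponential Bell polynomial `Y_k(y_1, …, y_k)`, with `Y_0 = 1`. -/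
noncomputable def completeBell (k : ℕ) (y : ℕ → ℝ) : ℝ :=
  if k = 0 then 1 else ∑ j ∈ Finset.Icc 1 k, partialBell k j y

/-- The `k`-th logarithmic partition polynomial
`P_k(x_1,…,x_k) = Σ_{j=1}^k (-1)^{j-1} (j-1)! B_{k,j}(x_1,…,x_{k-j+1})`. -/
noncomputable def logPartitionPoly (k : ℕ) (x : ℕ → ℝ) : ℝ :=
  ∑ j ∈ Finset.Icc 1 k, (-1 : ℝ) ^ (j - 1) * ((j - 1).factorial : ℝ) * partialBell k j x

/-- The rising factorial `⟨a⟩_n = a (a+1) ⋯ (a+n-1)` for a real number `a`. -/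
noncomputable def rising (a : ℝ) (n : ℕ) : ℝ := ∏ i ∈ Finset.range n, (a + i)

/-- The generalized Laguerre polynomial `L_k^{(α)}(t)`. -/
noncomputable def lag (α : ℝ) (k : ℕ) (t : ℝ) : ℝ :=
  Real.Gamma (α + 1 + k) / (k.factorial : ℝ) *
    ∑ j ∈ Finset.range (k + 1), (k.choose j : ℝ) * (-t) ^ j / Real.Gamma (α + j + 1)

section KummerAux

lemma rising_succ' (t : ℝ) (n : ℕ) : rising t (n + 1) = rising t n * (t + n) := by
  simp [rising, Finset.prod_range_succ]

lemma rising_pos' {s : ℝ} (hs : 0 < s) (n : ℕ) : 0 < rising s n :=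
  Finset.prod_pos fun i _ => by positivity

lemma rising_nonneg' {t : ℝ} (ht : 0 ≤ t) (n : ℕ) : 0 ≤ rising t n :=
  Finset.prod_nonneg fun i _ => by positivity

lemma rising_eq_eval (u : ℝ) (n : ℕ) : rising u n = (ascPochhammer ℝ n).eval u := by
  induction n with
  | zero => simp [rising]
  | succ n ih => rw [rising_succ', ascPochhammer_succ_right]; simp [ih]

lemma ascPochhammer_real_coeff (n j : ℕ) :
    (ascPochhammer ℝ n).coeff j = (stirling1 n j : ℝ) := by
  rw [stirling1, ← ascPochhammer_map (algebraMap ℕ ℝ) n, Polynomial.coeff_map]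
  rfl

lemma rising_eq_sum (u : ℝ) (n : ℕ) :
    rising u n = ∑ j ∈ Finset.range (n + 1), (stirling1 n j : ℝ) * u ^ j := by
  rw [rising_eq_eval,
    Polynomial.eval_eq_sum_range' (n := n + 1) (by rw [ascPochhammer_natDegree]; omega)]
  exact Finset.sum_congr rfl fun j _ => by rw [ascPochhammer_real_coeff]

lemma stirling1_eq_zero {n j : ℕ} (h : n < j) : stirling1 n j = 0 := by
  apply Polynomial.coeff_eq_zero_of_natDegree_lt
  rwa [ascPochhammer_natDegree]

lemma summable_base {s : ℝ} (hs : 0 < s) (y t : ℝ) (ht : 0 ≤ t) :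
    Summable (fun n : ℕ => rising t n * |y| ^ n / (rising s n * (n.factorial : ℝ))) := by
  set f : ℕ → ℝ := fun n => rising t n * |y| ^ n / (rising s n * (n.factorial : ℝ)) with hf
  have hfnn : ∀ n, 0 ≤ f n := fun n => by
    have := rising_pos' hs n; have := rising_nonneg' ht n; positivity
  apply summable_of_ratio_norm_eventually_le (r := 1/2) (by norm_num)
  filter_upwards [Filter.eventually_ge_atTop ⌈t⌉₊, Filter.eventually_ge_atTop ⌈4 * |y|⌉₊]
    with n h1 h2
  have hsn : (0:ℝ) < rising s n := rising_pos' hs n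
  have hsn' : (0:ℝ) < s + n := by positivity
  have hfac : (0:ℝ) < (n.factorial : ℝ) := by positivity
  have hn1 : (0:ℝ) < (n:ℝ) + 1 := by positivity
  have e : f (n + 1) = f n * ((t + n) * |y| / ((s + n) * ((n:ℝ) + 1))) := by
    rw [hf]
    simp only [rising_succ', pow_succ, Nat.factorial_succ]
    push_cast
    field_simp
  have ht' : t ≤ (n:ℝ) := le_trans (Nat.le_ceil t) (by exact_mod_cast h1)
  have hy' : 4 * |y| ≤ (n:ℝ) := le_trans (Nat.le_ceil _) (by exact_mod_cast h2)
  have hratio : (t + n) * |y| / ((s + n) * ((n:ℝ) + 1)) ≤ 1/2 := by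
    rw [div_le_iff₀ (by positivity)]
    have h1' : t + n ≤ 2 * (s + n) := by nlinarith
    have h2' : |y| ≤ ((n:ℝ) + 1) / 4 := by nlinarith
    nlinarith [abs_nonneg y, add_nonneg ht (Nat.cast_nonneg n)]
  have hr0 : 0 ≤ (t + n) * |y| / ((s + n) * ((n:ℝ) + 1)) := by positivity
  rw [Real.norm_eq_abs, Real.norm_eq_abs, abs_of_nonneg (hfnn _), abs_of_nonneg (hfnn _), e,
    mul_comm (f n)]
  exact mul_le_mul_of_nonneg_right hratio (hfnn n)

lemma summable_G {s : ℝ} (hs : 0 < s) (y u : ℝ) :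
    Summable (fun p : ℕ × ℕ =>
      (stirling1 p.1 p.2 : ℝ) * y ^ p.1 / (rising s p.1 * (p.1.factorial : ℝ)) * u ^ p.2) := by
  set G : ℕ × ℕ → ℝ := fun p =>
    (stirling1 p.1 p.2 : ℝ) * y ^ p.1 / (rising s p.1 * (p.1.factorial : ℝ)) * u ^ p.2 with hG
  rw [← summable_abs_iff]
  have habs : ∀ p : ℕ × ℕ, |G p| =
      (stirling1 p.1 p.2 : ℝ) * |y| ^ p.1 / (rising s p.1 * (p.1.factorial : ℝ)) * |u| ^ p.2 := by
    intro p
    have h1 : (0:ℝ) < rising s p.1 := rising_pos' hs p.1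
    rw [hG, abs_mul, abs_div, abs_mul, abs_mul, abs_pow, abs_pow,
      Nat.abs_cast, abs_of_pos h1, Nat.abs_cast]
  refine (summable_prod_of_nonneg (fun p => abs_nonneg (G p))).2 ⟨fun n => ?_, ?_⟩
  · exact summable_of_ne_finset_zero (s := Finset.range (n + 1)) fun j hj => by
      simp only [habs, stirling1_eq_zero (by simpa using hj)]; simp
  · have hcalc : ∀ n : ℕ, (∑' j, |G (n, j)|) =
        rising |u| n * |y| ^ n / (rising s n * (n.factorial : ℝ)) := by
      intro n
      rw [tsum_eq_sum (s := Finset.range (n + 1))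
        (fun j hj => by simp only [habs, stirling1_eq_zero (by simpa using hj)]; simp)]
      simp only [habs]
      rw [rising_eq_sum |u| n, Finset.sum_mul, Finset.sum_div]
      exact Finset.sum_congr rfl fun j _ => by ring
    simp only [hcalc]
    exact summable_base hs y |u| (abs_nonneg u)

lemma hasSum_coeffs {s : ℝ} (hs : 0 < s) (y u : ℝ) :
    HasSum (fun j : ℕ =>
        (∑' n : ℕ, (stirling1 n j : ℝ) * y ^ n / (rising s n * (n.factorial : ℝ))) * u ^ j)
      (∑' n : ℕ, rising u n * y ^ n / (rising s n * (n.factorial : ℝ))) := by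
  set G : ℕ × ℕ → ℝ := fun p =>
    (stirling1 p.1 p.2 : ℝ) * y ^ p.1 / (rising s p.1 * (p.1.factorial : ℝ)) * u ^ p.2 with hG
  have hGsum : Summable G := summable_G hs y u
  have hswap : Summable (fun p : ℕ × ℕ => G p.swap) := hGsum.prod_symm
  have htot : ∑' p : ℕ × ℕ, G p.swap = ∑' p : ℕ × ℕ, G p :=
    (Equiv.prodComm ℕ ℕ).tsum_eq (fun p => G p)
  have h1 : HasSum (fun j : ℕ => ∑' n : ℕ, G (n, j)) (∑' p : ℕ × ℕ, G p) := by
    have := hswap.hasSum.prod_fiberwise (g := fun j => ∑' n, G (n, j))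
      (fun j => (hswap.prod_factor j).hasSum_iff.2 rfl)
    rwa [htot] at this
  have h2 : ∑' p : ℕ × ℕ, G p = ∑' n : ℕ, rising u n * y ^ n / (rising s n * (n.factorial : ℝ)) := by
    rw [Summable.tsum_prod' hGsum hGsum.prod_factor]
    congr 1; funext n
    rw [tsum_eq_sum (s := Finset.range (n + 1))
      (fun j hj => by simp only [hG, stirling1_eq_zero (by simpa using hj)]; simp)]
    rw [rising_eq_sum u n, Finset.sum_mul, Finset.sum_div]
    exact Finset.sum_congr rfl fun j _ => by simp only [hG]; ring
  have h3 : ∀ j : ℕ, (∑' n : ℕ, G (n, j)) =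
      (∑' n : ℕ, (stirling1 n j : ℝ) * y ^ n / (rising s n * (n.factorial : ℝ))) * u ^ j := by
    intro j; simp only [hG]; exact tsum_mul_right
  rw [← h2]
  simpa only [h3] using h1

end KummerAux

set_option maxHeartbeats 1000000 in
/-- Derivatives of the Kummer function with respect to its first parameter at `0`:
for `k ≥ 1`, `∂^k/∂u^k ₁F₁(u; s; y)|_{u=0} = k! Σ_{n ≥ k} c(n,k) y^n/(n! ⟨s⟩_n)`. -/
theorem kummer_iteratedDeriv (s y : ℝ) (hs : 0 < s) (k : ℕ) (hk : 1 ≤ k) :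
    iteratedDeriv k
        (fun u : ℝ => ∑' n : ℕ, rising u n * y ^ n / (rising s n * (n.factorial : ℝ))) 0
      = (k.factorial : ℝ) *
          ∑' n : ℕ,
            (if k ≤ n then (stirling1 n k : ℝ) * y ^ n / ((n.factorial : ℝ) * rising s n)
            else 0) := by
  set a : ℕ → ℝ :=
    fun j => ∑' n : ℕ, (stirling1 n j : ℝ) * y ^ n / (rising s n * (n.factorial : ℝ)) with ha
  set p : FormalMultilinearSeries ℝ ℝ ℝ := FormalMultilinearSeries.ofScalars ℝ a with hp
  set f : ℝ → ℝ :=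
    fun u => ∑' n : ℕ, rising u n * y ^ n / (rising s n * (n.factorial : ℝ)) with hfdef
  -- summability of the coefficient bounds
  have hG1 : Summable (fun q : ℕ × ℕ =>
      |(stirling1 q.1 q.2 : ℝ) * y ^ q.1 / (rising s q.1 * (q.1.factorial : ℝ))|) := by
    have := (summable_G hs y 1).abs
    simpa using this
  have hb : Summable (fun j : ℕ =>
      ∑' n : ℕ, |(stirling1 n j : ℝ) * y ^ n / (rising s n * (n.factorial : ℝ))|) :=
    hG1.prod_symm.prod
  have hinner : ∀ j : ℕ, Summable (fun n : ℕ =>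
      |(stirling1 n j : ℝ) * y ^ n / (rising s n * (n.factorial : ℝ))|) :=
    fun j => hG1.prod_symm.prod_factor j
  have habs_a : ∀ j : ℕ, |a j| ≤
      ∑' n : ℕ, |(stirling1 n j : ℝ) * y ^ n / (rising s n * (n.factorial : ℝ))| := by
    intro j
    rw [ha]
    have h := norm_tsum_le_tsum_norm
      (f := fun n => (stirling1 n j : ℝ) * y ^ n / (rising s n * (n.factorial : ℝ)))
      (by simpa only [Real.norm_eq_abs] using hinner j)
    simpa only [Real.norm_eq_abs] using h
  have hrad : (1 : ENNReal) ≤ p.radius := by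
    apply FormalMultilinearSeries.le_radius_of_summable (r := 1)
    apply Summable.of_nonneg_of_le (fun n => by positivity) _ hb
    intro n
    rw [hp, FormalMultilinearSeries.ofScalars_norm]
    simpa using habs_a n
  have hball : HasFPowerSeriesOnBall f p 0 1 := by
    refine ⟨hrad, by norm_num, fun {u} hu => ?_⟩
    have := hasSum_coeffs hs y u
    simp only [hp, FormalMultilinearSeries.ofScalars_apply_eq, smul_eq_mul, zero_add]
    exact this
  have hiter : (k.factorial : ℝ) • p k (fun _ => (1:ℝ)) = iteratedDeriv k f 0 := by
    rw [iteratedDeriv_eq_iteratedFDeriv, ← hball.factorial_smul (y := (1:ℝ)) k]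
    simp [nsmul_eq_mul]
  have hpk : p k (fun _ => (1:ℝ)) = a k := by
    rw [hp, FormalMultilinearSeries.ofScalars_apply_eq]
    simp
  rw [← hiter, hpk, smul_eq_mul]
  congr 1
  apply tsum_congr
  intro n
  by_cases h : k ≤ n
  · rw [if_pos h, mul_comm (rising s n)]
  · rw [if_neg h, stirling1_eq_zero (lt_of_not_ge h)]
    simp
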